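/- arXiv:2603.01378 — 3 statements merged into one kernel-verified Lean document; each statement's English description precedes it below -/
import Mathlib

section
/- Let v_1,…,v_n be vectors in ℝ^r and suppose η ∈ ℝ^r is feasible (1 + ⟨η, v_i⟩ > 0 for every i) and solves the empirical-likelihood Lagrange equation ∑_{i=1}^n v_i/(1 + ⟨η, v_i⟩) = 0, and let p_i = n^{-1}(1 + ⟨η, v_i⟩)^{-1} be the associated empirical-likelihood weights. Then for any real numbers q_1,…,q_n with q_i > 0 for all i, ∑_{i=1}^n q_i = 1 and ∑_{i=1}^n q_i v_i = 0, one has ∑_{i=1}^n log q_i ≤ ∑_{i=1}^n log p_i. That is, the weights p_i maximize the empirical log-likelihood ∑_i log q_i over all probability weights satisfying the moment constraint ∑_i q_i v_i = 0. -/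
/-!
The inequality is the dual bound of empirical likelihood. Since `log x ≤ x - 1`,
`∑ log qᵢ - ∑ log pᵢ ≤ ∑ (qᵢ / pᵢ - 1)`, and `qᵢ / pᵢ = n qᵢ (1 + ⟪η, vᵢ⟫)` sums to `n`
because `q` is a probability vector with `∑ qᵢ vᵢ = 0`.
-/

open scoped RealInnerProductSpace

open Finset

theorem Finset.sum_log_le_sum_log_of_sum_div_le {ι : Type*} {s : Finset ι} {p q : ι → ℝ}
    (hp : ∀ i ∈ s, 0 < p i) (hq : ∀ i ∈ s, 0 < q i) (hsum : ∑ i ∈ s, q i / p i ≤ #s) :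
    ∑ i ∈ s, Real.log (q i) ≤ ∑ i ∈ s, Real.log (p i) := by
  have hlog : ∀ i ∈ s, Real.log (q i) - Real.log (p i) ≤ q i / p i - 1 := fun i hi => by
    rw [← Real.log_div (hq i hi).ne' (hp i hi).ne']
    exact Real.log_le_sub_one_of_pos (div_pos (hq i hi) (hp i hi))
  have := sum_le_sum hlog
  simp only [sum_sub_distrib, sum_const, nsmul_one] at this
  linarith

theorem Finset.sum_mul_one_add_inner_eq_one {ι E : Type*} [NormedAddCommGroup E]
    [InnerProductSpace ℝ E] {s : Finset ι} (v : ι → E) (η : E) {q : ι → ℝ}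
    (hqsum : ∑ i ∈ s, q i = 1) (hqmom : ∑ i ∈ s, q i • v i = 0) :
    ∑ i ∈ s, q i * (1 + ⟪η, v i⟫) = 1 := by
  have hinner : ∑ i ∈ s, q i * ⟪η, v i⟫ = 0 := by
    simpa only [inner_sum, real_inner_smul_right, inner_zero_right] using
      congrArg (⟪η, ·⟫) hqmom
  simp only [mul_add, mul_one, sum_add_distrib, hqsum, hinner, add_zero]

theorem stmt1_general {n r : ℕ} (v : Fin n → EuclideanSpace ℝ (Fin r))
    (η : EuclideanSpace ℝ (Fin r))
    (hfeas : ∀ i, 0 < 1 + ⟪η, v i⟫)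
    (p : Fin n → ℝ) (hp : ∀ i, p i = (n : ℝ)⁻¹ * (1 + ⟪η, v i⟫)⁻¹)
    (q : Fin n → ℝ) (hqpos : ∀ i, 0 < q i) (hqsum : ∑ i, q i = 1)
    (hqmom : ∑ i, q i • v i = 0) :
    ∑ i, Real.log (q i) ≤ ∑ i, Real.log (p i) := by
  have hn : ∀ i : Fin n, (0 : ℝ) < n := fun i => by exact_mod_cast i.pos
  have hppos : ∀ i, 0 < p i := fun i => by
    rw [hp i]
    exact mul_pos (inv_pos.mpr (hn i)) (inv_pos.mpr (hfeas i))
  have hratio : ∀ i, q i / p i = n * (q i * (1 + ⟪η, v i⟫)) := fun i => by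
    rw [hp i]
    field_simp [(hn i).ne', (hfeas i).ne']
  refine sum_log_le_sum_log_of_sum_div_le (fun i _ => hppos i) (fun i _ => hqpos i) ?_
  rw [sum_congr rfl fun i _ => hratio i, ← mul_sum,
    sum_mul_one_add_inner_eq_one v η hqsum hqmom, card_univ, Fintype.card_fin, mul_one]

/-- The empirical-likelihood weights associated with a feasible solution of the
Lagrange equation maximize the empirical log-likelihood among all probability
weights satisfying the moment constraint. -/
theorem stmt1 {n r : ℕ} (v : Fin n → EuclideanSpace ℝ (Fin r))
    (η : EuclideanSpace ℝ (Fin r))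
    (hfeas : ∀ i, 0 < 1 + ⟪η, v i⟫)
    (hlag : ∑ i, (1 + ⟪η, v i⟫)⁻¹ • v i = 0)
    (p : Fin n → ℝ) (hp : ∀ i, p i = (n : ℝ)⁻¹ * (1 + ⟪η, v i⟫)⁻¹)
    (q : Fin n → ℝ) (hqpos : ∀ i, 0 < q i) (hqsum : ∑ i, q i = 1)
    (hqmom : ∑ i, q i • v i = 0) :
    ∑ i, Real.log (q i) ≤ ∑ i, Real.log (p i) :=
  stmt1_general v η hfeas p hp q hqpos hqsum hqmom
end

section
/- Let v_1,…,v_n be vectors in ℝ^r. If the zero vector 0 lies in the interior of the convex hull of {v_1,…,v_n}, then there exists a feasible η ∈ ℝ^r (i.e., 1 + ⟨η, v_i⟩ > 0 for every i) that solves the empirical-likelihood Lagrange equation ∑_{i=1}^n v_i/(1 + ⟨η, v_i⟩) = 0. -/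
open scoped RealInnerProductSpace

open Set Metric InnerProductSpace Topology

/-!
The Lagrange equation says that `η` is a critical point of `η ↦ ∑ i, log (1 + ⟪η, v i⟫)`.
Since `0` is interior to the convex hull of the `v i`, the polytope
`{η | ∀ i, -1 ≤ ⟪η, v i⟫}` is bounded, hence compact. The product `∏ i, (1 + ⟪η, v i⟫)`
attains its maximum on it at a value `≥ 1` (its value at `0`), so every factor is positive
there. The maximiser is therefore an interior local maximum of the sum of logarithms, whose
gradient `∑ i, (1 + ⟪η, v i⟫)⁻¹ • v i` must vanish.
-/

theorem IsLocalMax.hasGradientAt_eq_zero {F : Type*} [NormedAddCommGroup F]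
    [InnerProductSpace ℝ F] [CompleteSpace F] {f : F → ℝ} {f' a : F}
    (h : IsLocalMax f a) (hf : HasGradientAt f f' a) : f' = 0 :=
  (toDual ℝ F).map_eq_zero_iff.mp (h.hasFDerivAt_eq_zero hf.hasFDerivAt)

section

variable {E ι : Type*} [NormedAddCommGroup E] [InnerProductSpace ℝ E] (v : ι → E)

theorem neg_one_le_inner_of_mem_convexHull {η x : E} (hη : ∀ i, -1 ≤ ⟪η, v i⟫)
    (hx : x ∈ convexHull ℝ (range v)) : -1 ≤ ⟪η, x⟫ :=
  convexHull_min (range_subset_iff.2 fun i => show v i ∈ {x | -1 ≤ ⟪η, x⟫} from hη i)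
    (convex_halfSpace_ge (innerₛₗ ℝ η).isLinear (-1)) hx

theorem norm_le_inv_of_closedBall_subset_convexHull {ε : ℝ} (hε : 0 < ε)
    (hball : closedBall 0 ε ⊆ convexHull ℝ (range v)) {η : E} (hη : ∀ i, -1 ≤ ⟪η, v i⟫) :
    ‖η‖ ≤ ε⁻¹ := by
  rcases eq_or_ne η 0 with rfl | hη0
  · simpa using hε.le
  have hnorm : 0 < ‖η‖ := norm_pos_iff.2 hη0
  have hy : -(ε / ‖η‖) • η ∈ closedBall (0 : E) ε := by
    rw [mem_closedBall_zero_iff, norm_smul, norm_neg, Real.norm_of_nonneg (by positivity),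
      div_mul_cancel₀ _ hnorm.ne']
  have h := neg_one_le_inner_of_mem_convexHull v hη (hball hy)
  rw [inner_smul_right, real_inner_self_eq_norm_sq] at h
  field_simp at h
  rw [← one_div, le_div_iff₀' hε]
  linarith

theorem isBounded_setOf_neg_one_le_inner
    (h0 : (0 : E) ∈ interior (convexHull ℝ (range v))) :
    Bornology.IsBounded {η : E | ∀ i, -1 ≤ ⟪η, v i⟫} := by
  obtain ⟨ε, hε, hball⟩ := nhds_basis_closedBall.mem_iff.1 (mem_interior_iff_mem_nhds.1 h0)
  exact isBounded_iff_forall_norm_le.2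
    ⟨ε⁻¹, fun η hη => norm_le_inv_of_closedBall_subset_convexHull v hε hball hη⟩

theorem isCompact_setOf_neg_one_le_inner [FiniteDimensional ℝ E]
    (h0 : (0 : E) ∈ interior (convexHull ℝ (range v))) :
    IsCompact {η : E | ∀ i, -1 ≤ ⟪η, v i⟫} := by
  refine isCompact_of_isClosed_isBounded ?_ (isBounded_setOf_neg_one_le_inner v h0)
  rw [ofPred_forall]
  exact isClosed_iInter fun i => isClosed_le continuous_const (continuous_id.inner continuous_const)

theorem exists_isLocalMax_sum_log_one_add_inner [Fintype ι] [FiniteDimensional ℝ E]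
    (h0 : (0 : E) ∈ interior (convexHull ℝ (range v))) :
    ∃ η : E, (∀ i, 0 < 1 + ⟪η, v i⟫) ∧ IsLocalMax (fun ξ => ∑ i, Real.log (1 + ⟪ξ, v i⟫)) η := by
  have hg : Continuous fun ξ : E => ∏ i, (1 + ⟪ξ, v i⟫) := by fun_prop
  have hzero : (0 : E) ∈ {η : E | ∀ i, -1 ≤ ⟪η, v i⟫} := fun i => by simp
  obtain ⟨η, hηK, hmax⟩ := (isCompact_setOf_neg_one_le_inner v h0).exists_isMaxOn
    ⟨0, hzero⟩ hg.continuousOn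
  have hprod : 0 < ∏ i, (1 + ⟪η, v i⟫) :=
    one_pos.trans_le (by simpa using isMaxOn_iff.1 hmax 0 hzero)
  have hpos : ∀ i, 0 < 1 + ⟪η, v i⟫ := fun i =>
    (by linarith [hηK i] : (0 : ℝ) ≤ 1 + ⟪η, v i⟫).lt_of_ne
      (Finset.prod_ne_zero_iff.1 hprod.ne' i (Finset.mem_univ i)).symm
  refine ⟨η, hpos, ?_⟩
  have hU : {ξ : E | ∀ i, 0 < 1 + ⟪ξ, v i⟫} ∈ 𝓝 η := by
    refine IsOpen.mem_nhds ?_ hpos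
    rw [ofPred_forall]
    exact isOpen_iInter_of_finite fun i => isOpen_lt continuous_const (by fun_prop)
  filter_upwards [hU] with ξ hξ
  rw [← Real.log_prod fun i _ => (hξ i).ne', ← Real.log_prod fun i _ => (hpos i).ne']
  exact Real.log_le_log (Finset.prod_pos fun i _ => hξ i) (hmax fun i => by linarith [hξ i])

theorem hasGradientAt_sum_log_one_add_inner [Fintype ι] [CompleteSpace E] {η : E}
    (hη : ∀ i, 0 < 1 + ⟪η, v i⟫) :
    HasGradientAt (fun ξ => ∑ i, Real.log (1 + ⟪ξ, v i⟫)) (∑ i, (1 + ⟪η, v i⟫)⁻¹ • v i) η := by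
  rw [hasGradientAt_iff_hasFDerivAt, map_sum]
  refine HasFDerivAt.fun_sum fun i _ => ?_
  rw [map_smul]
  have hinner : HasFDerivAt (fun ξ => 1 + ⟪ξ, v i⟫) (toDual ℝ E (v i)) η := by
    simp_rw [real_inner_comm (v i)]
    exact (toDual ℝ E (v i)).hasFDerivAt.const_add 1
  exact hinner.log (hη i).ne'

end

/-- If the zero vector lies in the interior of the convex hull of the
constraint vectors, then there exists a feasible solution of the
empirical-likelihood Lagrange equation. -/
theorem stmt2 {n r : ℕ} (v : Fin n → EuclideanSpace ℝ (Fin r))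
    (h0 : (0 : EuclideanSpace ℝ (Fin r)) ∈ interior (convexHull ℝ (Set.range v))) :
    ∃ η : EuclideanSpace ℝ (Fin r),
      (∀ i, 0 < 1 + ⟪η, v i⟫) ∧ ∑ i, (1 + ⟪η, v i⟫)⁻¹ • v i = 0 := by
  obtain ⟨η, hpos, hmax⟩ := exists_isLocalMax_sum_log_one_add_inner v h0
  exact ⟨η, hpos, hmax.hasGradientAt_eq_zero (hasGradientAt_sum_log_one_add_inner v hpos)⟩
end

section
/- Let v_1,…,v_n be vectors in ℝ^r whose linear span is all of ℝ^r. Then there is at most one feasible η ∈ ℝ^r (i.e., with 1 + ⟨η, v_i⟩ > 0 for every i) solving the empirical-likelihood Lagrange equation ∑_{i=1}^n v_i/(1 + ⟨η, v_i⟩) = 0. -/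
open scoped RealInnerProductSpace

/-! The difference of the Lagrange equations at two feasible solutions `η₁`, `η₂`, paired with
`η₂ - η₁`, is `∑ i, (a i⁻¹ - b i⁻¹) * (b i - a i) = 0` with `a i = 1 + ⟪η₁, v i⟫` and
`b i = 1 + ⟪η₂, v i⟫`. Since `x ↦ x⁻¹` is decreasing on positive reals, every summand is
nonnegative, hence zero, so `a = b`: `η₂ - η₁` is orthogonal to every `v i`, hence to their
span, which is the whole space. -/

theorem inv_sub_inv_mul_sub_nonneg {a b : ℝ} (ha : 0 < a) (hb : 0 < b) :
    0 ≤ (a⁻¹ - b⁻¹) * (b - a) := by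
  have key : (a⁻¹ - b⁻¹) * (b - a) = (b - a) ^ 2 / (a * b) := by
    field_simp
  rw [key]
  positivity

theorem eq_of_inv_sub_inv_mul_sub_eq_zero {K : Type*} [Field K] {a b : K}
    (h : (a⁻¹ - b⁻¹) * (b - a) = 0) : a = b := by
  rcases mul_eq_zero.1 h with h | h
  · exact inv_inj.1 (sub_eq_zero.1 h)
  · exact (sub_eq_zero.1 h).symm

theorem eq_zero_of_forall_inner_eq_zero_of_span_eq_top {ι E : Type*} [NormedAddCommGroup E]
    [InnerProductSpace ℝ E] {v : ι → E} (hspan : Submodule.span ℝ (Set.range v) = ⊤) {d : E}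
    (h : ∀ i, ⟪d, v i⟫ = 0) : d = 0 := by
  have hle : Submodule.span ℝ (Set.range v) ≤ (ℝ ∙ d)ᗮ := by
    rw [Submodule.span_le]
    rintro _ ⟨i, rfl⟩
    exact (Submodule.mem_orthogonal_singleton_iff_inner_right).2 (h i)
  rw [hspan, top_le_iff] at hle
  have hd : d ∈ (ℝ ∙ d)ᗮ := hle ▸ Submodule.mem_top
  exact inner_self_eq_zero.1 ((Submodule.mem_orthogonal_singleton_iff_inner_right).1 hd)

theorem inner_eq_inner_of_lagrange_eq_zero {ι E : Type*} [Fintype ι] [NormedAddCommGroup E]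
    [InnerProductSpace ℝ E] {v : ι → E} {η₁ η₂ : E}
    (h₁ : ∀ i, 0 < 1 + ⟪η₁, v i⟫) (e₁ : ∑ i, (1 + ⟪η₁, v i⟫)⁻¹ • v i = 0)
    (h₂ : ∀ i, 0 < 1 + ⟪η₂, v i⟫) (e₂ : ∑ i, (1 + ⟪η₂, v i⟫)⁻¹ • v i = 0) (i : ι) :
    ⟪η₁, v i⟫ = ⟪η₂, v i⟫ := by
  set a : ι → ℝ := fun i ↦ 1 + ⟪η₁, v i⟫
  set b : ι → ℝ := fun i ↦ 1 + ⟪η₂, v i⟫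
  have hsum : ∑ i, ((a i)⁻¹ - (b i)⁻¹) * (b i - a i) = 0 := by
    calc ∑ i, ((a i)⁻¹ - (b i)⁻¹) * (b i - a i)
        = ⟪η₂ - η₁, ∑ i, (a i)⁻¹ • v i - ∑ i, (b i)⁻¹ • v i⟫ := by
          simp only [a, b, inner_sub_right, inner_sum, inner_smul_right, inner_sub_left,
            ← Finset.sum_sub_distrib]
          exact Finset.sum_congr rfl fun i _ ↦ by ring
      _ = 0 := by rw [e₁, e₂, sub_zero, inner_zero_right]
  have hterm := (Finset.sum_eq_zero_iff_of_nonneg fun i _ ↦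
    inv_sub_inv_mul_sub_nonneg (h₁ i) (h₂ i)).1 hsum i (Finset.mem_univ i)
  exact add_left_cancel (eq_of_inv_sub_inv_mul_sub_eq_zero hterm)

/-- If the constraint vectors span ℝ^r, there is at most one feasible solution
of the empirical-likelihood Lagrange equation. -/
theorem stmt3 {n r : ℕ} (v : Fin n → EuclideanSpace ℝ (Fin r))
    (hspan : Submodule.span ℝ (Set.range v) = ⊤) :
    ∀ η₁ η₂ : EuclideanSpace ℝ (Fin r),
      (∀ i, 0 < 1 + ⟪η₁, v i⟫) → (∑ i, (1 + ⟪η₁, v i⟫)⁻¹ • v i = 0) →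
      (∀ i, 0 < 1 + ⟪η₂, v i⟫) → (∑ i, (1 + ⟪η₂, v i⟫)⁻¹ • v i = 0) →
      η₁ = η₂ := by
  intro η₁ η₂ h₁ e₁ h₂ e₂
  refine sub_eq_zero.1 (eq_zero_of_forall_inner_eq_zero_of_span_eq_top hspan fun i ↦ ?_)
  rw [inner_sub_left, inner_eq_inner_of_lagrange_eq_zero h₁ e₁ h₂ e₂ i, sub_self]
end
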